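/- arXiv:2605.29186 — 2 statements merged into one kernel-verified Lean document; each statement's English description precedes it below -/
import Mathlib

section
/- Let m_h(θ) = √(a_h(θ)² + b_h(θ)²) be the rectified symbol with (β₁,β₂) ≠ (0,0). If e ∈ ℝ² satisfies β·e ≠ 0, then the one-sided derivatives of t ↦ m_h(te) at t = 0 are +|β·e|/h and −|β·e|/h respectively; in particular t ↦ m_h(te) is not differentiable at t = 0. -/
/-!
Along the ray `t ↦ t • e` the diffusive part `a_h` of the symbol is `O(t²)` (since
`2 - cos u - cos v ≤ (u² + v²) / 2`), while the convective part `b_h` vanishes at `0` with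
derivative `c = (β · e) / h ≠ 0`. Since `|√(a² + b²) - |b|| ≤ |a|`, the symbol `m_h` agrees with
`|b_h|` up to `o(t)`, and `|b_h|` has the one-sided slopes `±|c|` at `0`; two different one-sided
derivatives rule out differentiability.
-/

open Real

noncomputable def mh (ε h β₁ β₂ θ₁ θ₂ : ℝ) : ℝ :=
  Real.sqrt (((2 * ε / h ^ 2) * (2 - Real.cos θ₁ - Real.cos θ₂)) ^ 2
    + ((β₁ * Real.sin θ₁ + β₂ * Real.sin θ₂) / h) ^ 2)

open Filter Asymptotics Set Topology

theorem abs_sqrt_sq_add_sq_sub_abs_le (a b : ℝ) : |√(a ^ 2 + b ^ 2) - (|b|)| ≤ |a| := by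
  have hb : |b| ≤ √(a ^ 2 + b ^ 2) := Real.abs_le_sqrt (by nlinarith [sq_nonneg a])
  have hab : √(a ^ 2 + b ^ 2) ≤ |a| + |b| := by
    rw [Real.sqrt_le_left (by positivity)]
    nlinarith [sq_abs a, sq_abs b, abs_nonneg a, abs_nonneg b]
  rw [abs_of_nonneg (sub_nonneg.2 hb)]
  linarith

theorem HasDerivWithinAt.sqrt_sq_add_sq_of_isLittleO {f g : ℝ → ℝ} {c c' x : ℝ} {s : Set ℝ}
    (hg : HasDerivWithinAt g c s x) (hgx : g x = 0) (hf : f =o[𝓝[s] x] (· - x)) (hfx : f x = 0)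
    (hs : ∀ t ∈ s, |(t - x) * c| = (t - x) * c') :
    HasDerivWithinAt (fun t => √(f t ^ 2 + g t ^ 2)) c' s x := by
  rw [hasDerivWithinAt_iff_isLittleO] at hg ⊢
  refine IsBigO.trans_isLittleO (IsBigO.of_bound' ?_) (hf.norm_left.add hg.norm_left)
  filter_upwards [self_mem_nhdsWithin] with t ht
  simp only [hfx, hgx, ne_eq, OfNat.ofNat_ne_zero, not_false_eq_true, zero_pow, add_zero,
    Real.sqrt_zero, smul_eq_mul, Real.norm_eq_abs, sub_zero]
  rw [← hs t ht, abs_of_nonneg (by positivity : 0 ≤ |f t| + |g t - (t - x) * c|)]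
  calc |√(f t ^ 2 + g t ^ 2) - (|(t - x) * c|)|
      ≤ |√(f t ^ 2 + g t ^ 2) - (|g t|)| + |(|g t|) - (|(t - x) * c|)| := abs_sub_le _ _ _
    _ ≤ |f t| + |g t - (t - x) * c| :=
      add_le_add (abs_sqrt_sq_add_sq_sub_abs_le _ _) (abs_abs_sub_abs_le_abs_sub _ _)

theorem HasDerivWithinAt.sqrt_sq_add_sq_Ici {f g : ℝ → ℝ} {c x : ℝ}
    (hg : HasDerivWithinAt g c (Ici x) x) (hgx : g x = 0) (hf : f =o[𝓝[Ici x] x] (· - x))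
    (hfx : f x = 0) :
    HasDerivWithinAt (fun t => √(f t ^ 2 + g t ^ 2)) |c| (Ici x) x :=
  hg.sqrt_sq_add_sq_of_isLittleO hgx hf hfx fun t ht => by
    rw [abs_mul, abs_of_nonneg (sub_nonneg.2 (mem_Ici.1 ht))]

theorem HasDerivWithinAt.sqrt_sq_add_sq_Iic {f g : ℝ → ℝ} {c x : ℝ}
    (hg : HasDerivWithinAt g c (Iic x) x) (hgx : g x = 0) (hf : f =o[𝓝[Iic x] x] (· - x))
    (hfx : f x = 0) :
    HasDerivWithinAt (fun t => √(f t ^ 2 + g t ^ 2)) (-|c|) (Iic x) x :=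
  hg.sqrt_sq_add_sq_of_isLittleO hgx hf hfx fun t ht => by
    rw [abs_mul, abs_of_nonpos (sub_nonpos.2 (mem_Iic.1 ht)), neg_mul, mul_neg]

theorem not_differentiableAt_of_hasDerivWithinAt_Ici_Iic {f : ℝ → ℝ} {d d' x : ℝ}
    (hr : HasDerivWithinAt f d (Ici x) x) (hl : HasDerivWithinAt f d' (Iic x) x) (hne : d ≠ d') :
    ¬ DifferentiableAt ℝ f x := fun hf =>
  hne <| ((uniqueDiffWithinAt_Ici x).eq_deriv _ hr hf.hasDerivAt.hasDerivWithinAt).trans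
    ((uniqueDiffWithinAt_Iic x).eq_deriv _ hf.hasDerivAt.hasDerivWithinAt hl)

theorem abs_two_sub_cos_sub_cos_le (u v : ℝ) : |2 - cos u - cos v| ≤ (u ^ 2 + v ^ 2) / 2 := by
  have := one_sub_sq_div_two_le_cos (x := u)
  have := one_sub_sq_div_two_le_cos (x := v)
  rw [abs_of_nonneg (by linarith [cos_le_one u, cos_le_one v])]
  linarith

theorem isLittleO_two_sub_cos_sub_cos (k e₁ e₂ : ℝ) :
    (fun t : ℝ => k * (2 - cos (t * e₁) - cos (t * e₂))) =o[𝓝 0] id := by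
  refine IsBigO.trans_isLittleO (g := fun t : ℝ => t ^ 2) ?_ (isLittleO_pow_id one_lt_two)
  refine IsBigO.of_bound (|k| * ((e₁ ^ 2 + e₂ ^ 2) / 2)) (Eventually.of_forall fun t => ?_)
  rw [norm_mul, Real.norm_eq_abs, Real.norm_eq_abs, Real.norm_eq_abs, abs_sq]
  calc |k| * |2 - cos (t * e₁) - cos (t * e₂)| ≤ |k| * (((t * e₁) ^ 2 + (t * e₂) ^ 2) / 2) :=
        mul_le_mul_of_nonneg_left (abs_two_sub_cos_sub_cos_le _ _) (abs_nonneg k)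
    _ = |k| * ((e₁ ^ 2 + e₂ ^ 2) / 2) * t ^ 2 := by ring

theorem hasDerivAt_sin_mul_add_sin_mul (β₁ β₂ e₁ e₂ : ℝ) :
    HasDerivAt (fun t : ℝ => β₁ * sin (t * e₁) + β₂ * sin (t * e₂)) (β₁ * e₁ + β₂ * e₂) 0 := by
  have hsin (a : ℝ) : HasDerivAt (fun t : ℝ => sin (t * a)) a 0 := by
    simpa using (hasDerivAt_mul_const (x := 0) a).sin
  exact ((hsin e₁).const_mul β₁).add ((hsin e₂).const_mul β₂)

theorem rectified_symbol_corner_general (ε h β₁ β₂ e₁ e₂ : ℝ) (hh : 0 < h)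
    (he : β₁ * e₁ + β₂ * e₂ ≠ 0) :
    HasDerivWithinAt (fun t : ℝ => mh ε h β₁ β₂ (t * e₁) (t * e₂))
        (|β₁ * e₁ + β₂ * e₂| / h) (Set.Ici 0) 0 ∧
    HasDerivWithinAt (fun t : ℝ => mh ε h β₁ β₂ (t * e₁) (t * e₂))
        (-(|β₁ * e₁ + β₂ * e₂| / h)) (Set.Iic 0) 0 ∧
    ¬ DifferentiableAt ℝ (fun t : ℝ => mh ε h β₁ β₂ (t * e₁) (t * e₂)) 0 := by
  have hb := (hasDerivAt_sin_mul_add_sin_mul β₁ β₂ e₁ e₂).div_const h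
  have ha : _ =o[𝓝 (0 : ℝ)] (· - (0 : ℝ)) :=
    (isLittleO_two_sub_cos_sub_cos (2 * ε / h ^ 2) e₁ e₂).congr_right fun t => (sub_zero t).symm
  have hc : |(β₁ * e₁ + β₂ * e₂) / h| = |β₁ * e₁ + β₂ * e₂| / h := by
    rw [abs_div, abs_of_pos hh]
  have hr := hb.hasDerivWithinAt.sqrt_sq_add_sq_Ici (by simp) (ha.mono nhdsWithin_le_nhds)
    (by norm_num)
  have hl := hb.hasDerivWithinAt.sqrt_sq_add_sq_Iic (by simp) (ha.mono nhdsWithin_le_nhds)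
    (by norm_num)
  rw [hc] at hr hl
  refine ⟨hr, hl, not_differentiableAt_of_hasDerivWithinAt_Ici_Iic hr hl ?_⟩
  have : 0 < |β₁ * e₁ + β₂ * e₂| / h := div_pos (abs_pos.2 he) hh
  linarith

theorem rectified_symbol_corner (ε h β₁ β₂ e₁ e₂ : ℝ) (hε : 0 < ε) (hh : 0 < h)
    (hβ : (β₁, β₂) ≠ (0, 0)) (he : β₁ * e₁ + β₂ * e₂ ≠ 0) :
    HasDerivWithinAt (fun t : ℝ => mh ε h β₁ β₂ (t * e₁) (t * e₂))
        (|β₁ * e₁ + β₂ * e₂| / h) (Set.Ici 0) 0 ∧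
    HasDerivWithinAt (fun t : ℝ => mh ε h β₁ β₂ (t * e₁) (t * e₂))
        (-(|β₁ * e₁ + β₂ * e₂| / h)) (Set.Iic 0) 0 ∧
    ¬ DifferentiableAt ℝ (fun t : ℝ => mh ε h β₁ β₂ (t * e₁) (t * e₂)) 0 :=
  rectified_symbol_corner_general ε h β₁ β₂ e₁ e₂ hh he
end

section
/- If (β₁,β₂) ≠ (0,0), the rectified symbol m_h(θ₁,θ₂) = √(a_h(θ₁,θ₂)² + b_h(θ₁,θ₂)²), regarded as a 2π-periodic continuous function on ℝ², does not coincide with any trigonometric polynomial in (θ₁,θ₂), i.e., with any finite linear combination of functions exp(i(kθ₁ + lθ₂)) for integers k, l. -/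
/-!
Along the line `θ = t • β` the symbol `m_h` vanishes at `t = 0` and dominates `|b_h|`, whose
derivative there is `|β|² / h ≠ 0`: `m_h` has a conical singularity at the origin. A trigonometric
polynomial is differentiable, and a differentiable nonnegative function vanishing at a point has
zero derivative there, so it cannot dominate a function with nonzero slope through that zero.
-/

open Real

open Asymptotics

theorem hasDerivAt_zero_of_abs_le {f g : ℝ → ℝ} {x : ℝ} (hf : DifferentiableAt ℝ f x)
    (hfx : f x = 0) (hgx : g x = 0) (hle : ∀ t, |g t| ≤ f t) : HasDerivAt g 0 x := by
  have hmin : IsLocalMin f x := .of_forall fun t => hfx ▸ (abs_nonneg _).trans (hle t)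
  have hf' : HasDerivAt f 0 x := hmin.deriv_eq_zero ▸ hf.hasDerivAt
  rw [hasDerivAt_iff_isLittleO] at hf' ⊢
  refine (IsBigO.of_bound 1 (.of_forall fun t => ?_)).trans_isLittleO hf'
  simpa [hfx, hgx] using (hle t).trans (le_abs_self _)

theorem differentiable_trigPoly_along_line (F : Finset (ℤ × ℤ)) (c : ℤ × ℤ → ℂ) (a b : ℝ) :
    Differentiable ℝ fun t : ℝ => ∑ k ∈ F, c k *
      Complex.exp (Complex.I * ((k.1 : ℂ) * ((t * a : ℝ) : ℂ) + (k.2 : ℂ) * ((t * b : ℝ) : ℂ))) := by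
  fun_prop

theorem abs_convection_symbol_le_mh (ε h β₁ β₂ θ₁ θ₂ : ℝ) :
    |(β₁ * sin θ₁ + β₂ * sin θ₂) / h| ≤ mh ε h β₁ β₂ θ₁ θ₂ :=
  (sqrt_sq_eq_abs _).symm.trans_le (sqrt_le_sqrt (le_add_of_nonneg_left (sq_nonneg _)))

theorem mh_zero (ε h β₁ β₂ : ℝ) : mh ε h β₁ β₂ 0 0 = 0 := by
  norm_num [mh]

theorem hasDerivAt_convection_symbol_along_beta (β₁ β₂ h : ℝ) :
    HasDerivAt (fun t => (β₁ * sin (t * β₁) + β₂ * sin (t * β₂)) / h) ((β₁ ^ 2 + β₂ ^ 2) / h) 0 := by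
  have hsin (b : ℝ) : HasDerivAt (fun t => sin (t * b)) b 0 := by
    simpa using (hasDerivAt_mul_const b (x := (0 : ℝ))).sin
  simpa [sq] using (((hsin β₁).const_mul β₁).add ((hsin β₂).const_mul β₂)).div_const h

theorem rectified_symbol_not_trig_poly_general (ε h β₁ β₂ : ℝ) (hh : 0 < h)
    (hβ : (β₁, β₂) ≠ (0, 0)) :
    ¬ ∃ (F : Finset (ℤ × ℤ)) (c : ℤ × ℤ → ℂ), ∀ θ₁ θ₂ : ℝ,
      ((mh ε h β₁ β₂ θ₁ θ₂ : ℝ) : ℂ) =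
        ∑ k ∈ F, c k * Complex.exp (Complex.I * ((k.1 : ℂ) * θ₁ + (k.2 : ℂ) * θ₂)) := by
  rintro ⟨F, c, hF⟩
  let f : ℝ → ℝ := fun t => mh ε h β₁ β₂ (t * β₁) (t * β₂)
  have hf : DifferentiableAt ℝ f 0 := by
    have hre : f = fun t => (∑ k ∈ F, c k * Complex.exp (Complex.I *
        ((k.1 : ℂ) * ((t * β₁ : ℝ) : ℂ) + (k.2 : ℂ) * ((t * β₂ : ℝ) : ℂ)))).re := by
      ext t
      rw [← hF]
      rfl
    rw [hre]
    exact (Complex.reCLM.differentiable.comp (differentiable_trigPoly_along_line F c β₁ β₂)) 0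
  have hzero := hasDerivAt_zero_of_abs_le hf (by simpa [f] using mh_zero ε h β₁ β₂)
    (by simp) fun t => abs_convection_symbol_le_mh ε h β₁ β₂ _ _
  have hnorm : (β₁ ^ 2 + β₂ ^ 2) / h = 0 :=
    (hasDerivAt_convection_symbol_along_beta β₁ β₂ h).unique hzero
  have hpos : 0 < β₁ ^ 2 + β₂ ^ 2 := by
    by_contra! hle
    exact hβ (Prod.ext (by nlinarith) (by nlinarith))
  exact (div_pos hpos hh).ne' hnorm

theorem rectified_symbol_not_trig_poly (ε h β₁ β₂ : ℝ) (hε : 0 < ε) (hh : 0 < h)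
    (hβ : (β₁, β₂) ≠ (0, 0)) :
    ¬ ∃ (F : Finset (ℤ × ℤ)) (c : ℤ × ℤ → ℂ), ∀ θ₁ θ₂ : ℝ,
      ((mh ε h β₁ β₂ θ₁ θ₂ : ℝ) : ℂ) =
        ∑ k ∈ F, c k * Complex.exp (Complex.I * ((k.1 : ℂ) * θ₁ + (k.2 : ℂ) * θ₂)) :=
  rectified_symbol_not_trig_poly_general ε h β₁ β₂ hh hβ
end
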